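/- Let F be a field of characteristic ≠ 2, J = J_n the antidiagonal matrix of ones, and W' = { b ∈ Mat_{n×n}(F) : J b = ᵗb J }. For a ∈ GL_n(F), the linear map b ↦ a · b · J ᵗa J preserves W' and has determinant det(a)^{n+1} on W'. -/

import Mathlib

open Matrix

/-- The `n × n` antidiagonal matrix of ones. -/
def Jmat (F : Type) [Field F] (n : ℕ) : Matrix (Fin n) (Fin n) F :=
  fun i j => if (i : ℕ) + (j : ℕ) = n - 1 then 1 else 0

/-- The space `W' = { b : J b = ᵗb J }` (matrices `b` with `J b` symmetric). -/
def Wsp (F : Type) [Field F] (n : ℕ) : Submodule F (Matrix (Fin n) (Fin n) F) where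
  carrier := {b | Jmat F n * b = bᵀ * Jmat F n}
  zero_mem' := by simp
  add_mem' := by
    intro b c hb hc
    simp only [Set.mem_setOf_eq] at *
    rw [Matrix.mul_add, hb, hc, Matrix.transpose_add, Matrix.add_mul]
  smul_mem' := by
    intro t b hb
    simp only [Set.mem_setOf_eq] at *
    rw [Matrix.mul_smul, hb, Matrix.transpose_smul, Matrix.smul_mul]

namespace StmtAux

variable (F : Type) [Field F] (n : ℕ)

lemma J_apply (i j : Fin n) : Jmat F n i j = if j = i.rev then 1 else 0 := by
  unfold Jmat
  congr 1
  have hi := i.isLt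
  have hj := j.isLt
  simp only [eq_iff_iff, Fin.ext_iff, Fin.val_rev]
  omega

lemma J_apply' (i j : Fin n) : Jmat F n i j = if i = j.rev then 1 else 0 := by
  unfold Jmat
  congr 1
  have hi := i.isLt
  have hj := j.isLt
  simp only [eq_iff_iff, Fin.ext_iff, Fin.val_rev]
  omega

lemma J_transpose : (Jmat F n)ᵀ = Jmat F n := by
  ext i j
  rw [Matrix.transpose_apply, J_apply, J_apply']

variable {F n}

lemma J_mul_apply (b : Matrix (Fin n) (Fin n) F) (i j : Fin n) :
    (Jmat F n * b) i j = b i.rev j := by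
  rw [Matrix.mul_apply]
  simp [J_apply, ite_mul]

lemma mul_J_apply (b : Matrix (Fin n) (Fin n) F) (i j : Fin n) :
    (b * Jmat F n) i j = b i j.rev := by
  rw [Matrix.mul_apply]
  simp [J_apply', mul_ite]

variable (F n)

lemma JJ : Jmat F n * Jmat F n = 1 := by
  ext i j
  rw [J_mul_apply, J_apply, Fin.rev_rev, Matrix.one_apply]
  simp [eq_comm]

variable {F n}

lemma mem_Wsp_iff {b : Matrix (Fin n) (Fin n) F} :
    b ∈ Wsp F n ↔ ∀ i j, b i.rev j = b j.rev i := by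
  constructor
  · intro h i j
    have h2 : (Jmat F n * b) i j = (bᵀ * Jmat F n) i j := by rw [h]
    rwa [J_mul_apply, mul_J_apply, Matrix.transpose_apply] at h2
  · intro h
    ext i j
    rw [J_mul_apply, mul_J_apply, Matrix.transpose_apply]
    exact h i j

end StmtAux

namespace StmtAux

variable (F : Type) [Field F] (n : ℕ)

/-- The conjugation map on the full matrix space. -/
def Tmat (a : Matrix (Fin n) (Fin n) F) :
    Matrix (Fin n) (Fin n) F →ₗ[F] Matrix (Fin n) (Fin n) F where
  toFun x := a * x * (Jmat F n * aᵀ * Jmat F n)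
  map_add' x y := by rw [Matrix.mul_add, Matrix.add_mul]
  map_smul' t x := by rw [Matrix.mul_smul, Matrix.smul_mul]; rfl

variable {F n}

lemma Tmat_apply (a x : Matrix (Fin n) (Fin n) F) :
    Tmat F n a x = a * x * (Jmat F n * aᵀ * Jmat F n) := rfl

lemma J_mul_J_mul (m : Matrix (Fin n) (Fin n) F) : Jmat F n * (Jmat F n * m) = m := by
  rw [← Matrix.mul_assoc, JJ, Matrix.one_mul]

lemma Tmat_mem (a : Matrix (Fin n) (Fin n) F) :
    ∀ x ∈ Wsp F n, Tmat F n a x ∈ Wsp F n := by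
  intro x hx
  have hx0 : Jmat F n * x = xᵀ * Jmat F n := hx
  have hx' : Jmat F n * xᵀ = x * Jmat F n := by
    calc Jmat F n * xᵀ = Jmat F n * (xᵀ * Jmat F n) * Jmat F n := by
          rw [Matrix.mul_assoc (Jmat F n) (xᵀ * Jmat F n), Matrix.mul_assoc xᵀ, JJ,
            Matrix.mul_one]
    _ = Jmat F n * Jmat F n * x * Jmat F n := by
          rw [← hx0, Matrix.mul_assoc (Jmat F n) (Jmat F n) x]
    _ = x * Jmat F n := by rw [JJ, Matrix.one_mul]
  show Jmat F n * (Tmat F n a x) = (Tmat F n a x)ᵀ * Jmat F n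
  rw [Tmat_apply]
  simp only [Matrix.transpose_mul, Matrix.transpose_transpose, J_transpose]
  simp only [Matrix.mul_assoc]
  congr 1
  congr 1
  rw [← Matrix.mul_assoc (Jmat F n) xᵀ, hx', Matrix.mul_assoc]

variable (F n)

/-- The conjugation map restricted to `W'`. -/
def T (a : Matrix (Fin n) (Fin n) F) : Wsp F n →ₗ[F] Wsp F n :=
  (Tmat F n a).restrict (Tmat_mem a)

variable {F n}

lemma T_coe (a : Matrix (Fin n) (Fin n) F) (b : Wsp F n) :
    (T F n a b : Matrix (Fin n) (Fin n) F) =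
      a * (b : Matrix (Fin n) (Fin n) F) * (Jmat F n * aᵀ * Jmat F n) := rfl

lemma T_one : T F n 1 = LinearMap.id := by
  apply LinearMap.ext
  intro b
  apply Subtype.ext
  rw [LinearMap.id_apply, T_coe, Matrix.transpose_one, Matrix.one_mul, Matrix.mul_one,
    JJ]
  rw [Matrix.mul_one]

lemma T_mul (a a' : Matrix (Fin n) (Fin n) F) :
    T F n (a * a') = (T F n a).comp (T F n a') := by
  apply LinearMap.ext
  intro b
  apply Subtype.ext
  rw [LinearMap.comp_apply, T_coe, T_coe, T_coe]
  simp only [Matrix.transpose_mul, Matrix.mul_assoc, J_mul_J_mul]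

end StmtAux

namespace StmtAux

/-- determinant of `1 + nilpotent` matrix is 1. -/
lemma det_one_add_nilpotent {F : Type} [Field F] {m : Type} [Fintype m] [DecidableEq m]
    (N : Matrix m m F) (h : IsNilpotent N) : (1 + N).det = 1 := by
  have h1 : IsUnit N.charpolyRev := Matrix.isUnit_charpolyRev_of_isNilpotent h
  rw [Polynomial.isUnit_iff] at h1
  obtain ⟨c, -, hc⟩ := h1
  have h0 : Polynomial.eval 0 N.charpolyRev = 1 := Matrix.eval_charpolyRev
  rw [← hc, Polynomial.eval_C] at h0
  have hrev : N.charpolyRev = 1 := by rw [← hc, h0, Polynomial.C_1]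
  have hmap : ((1 : Matrix m m (Polynomial F)) -
      (Polynomial.X : Polynomial F) • N.map Polynomial.C).map (Polynomial.eval (-1)) = 1 + N := by
    ext i j
    rcases eq_or_ne i j with rfl | hij
    · simp [Matrix.map_apply, Matrix.one_apply, Matrix.sub_apply]
    · simp [Matrix.map_apply, Matrix.one_apply, Matrix.sub_apply, hij]
  have : Polynomial.eval (-1) N.charpolyRev = (1 + N).det := by
    rw [Matrix.charpolyRev, ← Polynomial.coe_evalRingHom, RingHom.map_det, RingHom.mapMatrix_apply,
      Polynomial.coe_evalRingHom, hmap]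
  rw [hrev, Polynomial.eval_one] at this
  exact this.symm

end StmtAux

namespace StmtAux

lemma det_id_add_nilpotent {F : Type} [Field F] {V : Type} [AddCommGroup V] [Module F V]
    [FiniteDimensional F V] (f : V →ₗ[F] V) (h : IsNilpotent f) :
    LinearMap.det (LinearMap.id + f) = 1 := by
  let b := Module.finBasis F V
  rw [← LinearMap.det_toMatrix b]
  have hN : IsNilpotent (LinearMap.toMatrix b b f) := by
    obtain ⟨k, hk⟩ := h
    exact ⟨k, by rw [LinearMap.toMatrix_pow, hk, map_zero]⟩
  rw [map_add, LinearMap.toMatrix_id]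
  exact det_one_add_nilpotent _ hN

end StmtAux

namespace StmtAux

variable {F : Type} [Field F] {n : ℕ}

lemma det_T_transvection {i j : Fin n} (hij : i ≠ j) (c : F) :
    LinearMap.det (T F n (Matrix.transvection i j c)) = 1 := by
  set E : Matrix (Fin n) (Fin n) F := Matrix.single i j c with hEdef
  set E' : Matrix (Fin n) (Fin n) F := Jmat F n * Eᵀ * Jmat F n with hE'def
  have hEE : E * E = 0 := Matrix.single_mul_single_of_ne (c := c) i j i hij.symm c
  have hEtEt : Eᵀ * Eᵀ = 0 := by
    rw [← Matrix.transpose_mul, hEE, Matrix.transpose_zero]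
  have hE'E' : E' * E' = 0 := by
    rw [hE'def]
    simp only [Matrix.mul_assoc, J_mul_J_mul]
    rw [← Matrix.mul_assoc Eᵀ Eᵀ, hEtEt, Matrix.zero_mul, Matrix.mul_zero]
  have hA : ∀ m : Matrix (Fin n) (Fin n) F, E * (E * m) = 0 := by
    intro m; rw [← Matrix.mul_assoc, hEE, Matrix.zero_mul]
  have h1 : Jmat F n * (1 + E)ᵀ * Jmat F n = 1 + E' := by
    rw [Matrix.transpose_add, Matrix.transpose_one, Matrix.mul_add, Matrix.add_mul,
      Matrix.mul_one, JJ, hE'def]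
  have key : ∀ x : Matrix (Fin n) (Fin n) F,
      Tmat F n (Matrix.transvection i j c) x = x + (E * x + x * E' + E * (x * E')) := by
    intro x
    rw [Tmat_apply]
    have : Matrix.transvection i j c = 1 + E := rfl
    rw [this, h1]
    noncomm_ring
  set N : Wsp F n →ₗ[F] Wsp F n := T F n (Matrix.transvection i j c) - LinearMap.id with hNdef
  have hN1 : ∀ x : Wsp F n,
      (N x : Matrix (Fin n) (Fin n) F) =
        E * (x : Matrix (Fin n) (Fin n) F) + (x : Matrix (Fin n) (Fin n) F) * E'
          + E * ((x : Matrix (Fin n) (Fin n) F) * E') := by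
    intro x
    have : (T F n (Matrix.transvection i j c) x : Matrix (Fin n) (Fin n) F) =
        (x : Matrix (Fin n) (Fin n) F)
          + (E * (x : Matrix (Fin n) (Fin n) F) + (x : Matrix (Fin n) (Fin n) F) * E'
            + E * ((x : Matrix (Fin n) (Fin n) F) * E')) :=
      key (x : Matrix (Fin n) (Fin n) F)
    rw [hNdef]
    simp only [LinearMap.sub_apply, LinearMap.id_apply, Submodule.coe_sub, this]
    abel
  have hNpow : N ^ 3 = 0 := by
    apply LinearMap.ext
    intro b
    rw [pow_succ, pow_succ, pow_one, Module.End.mul_apply, Module.End.mul_apply]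
    apply Subtype.ext
    rw [hN1, hN1, hN1]
    simp only [Matrix.mul_add, Matrix.add_mul, Matrix.mul_assoc, hA, hE'E',
      Matrix.mul_zero, Matrix.zero_mul, add_zero, zero_add, Matrix.zero_mul]
    simp
  have hTN : T F n (Matrix.transvection i j c) = LinearMap.id + N := by
    rw [hNdef]; abel
  rw [hTN]
  exact det_id_add_nilpotent N ⟨3, hNpow⟩

end StmtAux

namespace StmtAux

variable {F : Type} [Field F] {n : ℕ}

/-- symmetrized function from data on pairs `i ≤ j`. -/
def sOf (f : {q : Fin n × Fin n // q.1 ≤ q.2} → F) (i j : Fin n) : F :=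
  if h : i ≤ j then f ⟨(i, j), h⟩ else f ⟨(j, i), le_of_not_ge h⟩

lemma sOf_symm (f : {q : Fin n × Fin n // q.1 ≤ q.2} → F) (i j : Fin n) :
    sOf f i j = sOf f j i := by
  unfold sOf
  rcases le_or_gt i j with h | h
  · rcases eq_or_lt_of_le h with rfl | h'
    · simp
    · rw [dif_pos h, dif_neg (not_le.mpr h')]
  · rw [dif_neg (not_le.mpr h), dif_pos h.le]

lemma sOf_mem (f : {q : Fin n × Fin n // q.1 ≤ q.2} → F) :
    (fun i j => sOf f i.rev j : Matrix (Fin n) (Fin n) F) ∈ Wsp F n := by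
  refine mem_Wsp_iff.mpr ?_
  intro i j
  show sOf f i.rev.rev j = sOf f j.rev.rev i
  rw [Fin.rev_rev, Fin.rev_rev, sOf_symm]

/-- the coordinate linear equivalence between `W'` and functions on pairs `i ≤ j`. -/
def wEquiv : Wsp F n ≃ₗ[F] ({q : Fin n × Fin n // q.1 ≤ q.2} → F) where
  toFun b q := (b : Matrix (Fin n) (Fin n) F) q.1.1.rev q.1.2
  map_add' x y := rfl
  map_smul' t x := rfl
  invFun f := ⟨fun i j => sOf f i.rev j, sOf_mem f⟩
  left_inv := by
    intro b
    apply Subtype.ext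
    ext i j
    show sOf (fun q => (b : Matrix (Fin n) (Fin n) F) q.1.1.rev q.1.2) i.rev j
      = (b : Matrix (Fin n) (Fin n) F) i j
    have hb := (mem_Wsp_iff.mp b.2)
    unfold sOf
    split
    · show (b : Matrix (Fin n) (Fin n) F) i.rev.rev j = _
      rw [Fin.rev_rev]
    · show (b : Matrix (Fin n) (Fin n) F) j.rev i.rev = _
      rw [hb, Fin.rev_rev]
  right_inv := by
    intro f
    funext q
    show sOf f q.1.1.rev.rev q.1.2 = f q
    rw [Fin.rev_rev]
    unfold sOf
    rw [dif_pos q.2]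

lemma J_diag_J (d : Fin n → F) :
    Jmat F n * Matrix.diagonal d * Jmat F n = Matrix.diagonal (fun p => d p.rev) := by
  ext p q
  rw [mul_J_apply, J_mul_apply]
  rcases eq_or_ne p q with rfl | h
  · rw [Matrix.diagonal_apply_eq, Matrix.diagonal_apply_eq]
  · rw [Matrix.diagonal_apply_ne _ (fun hc => h (Fin.rev_injective hc)),
      Matrix.diagonal_apply_ne _ h]

lemma det_T_diagonal (d : Fin n → F) :
    LinearMap.det (T F n (Matrix.diagonal d)) =
      ∏ q : {q : Fin n × Fin n // q.1 ≤ q.2}, (d q.1.1.rev * d q.1.2.rev) := by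
  have hconj : ((wEquiv : Wsp F n ≃ₗ[F] _) : Wsp F n →ₗ[F] _) ∘ₗ T F n (Matrix.diagonal d) ∘ₗ
      ((wEquiv.symm : _ ≃ₗ[F] Wsp F n) : _ →ₗ[F] Wsp F n) =
      Matrix.toLin' (Matrix.diagonal (fun q : {q : Fin n × Fin n // q.1 ≤ q.2} =>
        d q.1.1.rev * d q.1.2.rev)) := by
    apply LinearMap.ext
    intro f
    funext q
    rw [Matrix.toLin'_apply, Matrix.mulVec_diagonal]
    show (T F n (Matrix.diagonal d) (wEquiv.symm f) : Matrix (Fin n) (Fin n) F) q.1.1.rev q.1.2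
      = d q.1.1.rev * d q.1.2.rev * f q
    rw [T_coe, Matrix.diagonal_transpose, J_diag_J]
    rw [Matrix.mul_diagonal, Matrix.diagonal_mul]
    have : ((wEquiv.symm f : Wsp F n) : Matrix (Fin n) (Fin n) F) q.1.1.rev q.1.2
        = f q := by
      show sOf f q.1.1.rev.rev q.1.2 = f q
      rw [Fin.rev_rev]
      unfold sOf
      rw [dif_pos q.2]
    rw [this]
    ring
  have := LinearMap.det_conj (T F n (Matrix.diagonal d)) (wEquiv : Wsp F n ≃ₗ[F] _)
  rw [hconj] at this
  rw [← this, LinearMap.det_toLin', Matrix.det_diagonal]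

end StmtAux

namespace StmtAux

variable {F : Type} [Field F] {n : ℕ}

lemma prod_pairs (d : Fin n → F) :
    ∏ q : {q : Fin n × Fin n // q.1 ≤ q.2}, (d q.1.1.rev * d q.1.2.rev)
      = (∏ i, d i) ^ (n + 1) := by
  have step1 : ∏ q : {q : Fin n × Fin n // q.1 ≤ q.2}, (d q.1.1.rev * d q.1.2.rev)
      = ∏ q : {q : Fin n × Fin n // q.1 ≤ q.2}, (d q.1.1 * d q.1.2) := by
    apply Fintype.prod_equiv
      (⟨fun q => ⟨(q.1.2.rev, q.1.1.rev), Fin.rev_le_rev.mpr q.2⟩,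
        fun q => ⟨(q.1.2.rev, q.1.1.rev), Fin.rev_le_rev.mpr q.2⟩,
        fun q => by apply Subtype.ext; simp [Fin.rev_rev],
        fun q => by apply Subtype.ext; simp [Fin.rev_rev]⟩ :
        {q : Fin n × Fin n // q.1 ≤ q.2} ≃ {q : Fin n × Fin n // q.1 ≤ q.2})
    intro q
    exact mul_comm _ _
  rw [step1]
  rw [← Finset.prod_subtype (Finset.univ.filter fun q : Fin n × Fin n => q.1 ≤ q.2)
    (fun q => by simp) (fun q : Fin n × Fin n => d q.1 * d q.2)]
  rw [Finset.prod_mul_distrib]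
  have hA : ∏ q ∈ Finset.univ.filter (fun q : Fin n × Fin n => q.1 ≤ q.2), d q.1
      = ∏ i, d i ^ (Finset.univ.filter fun j : Fin n => i ≤ j).card := by
    rw [Finset.prod_filter, Fintype.prod_prod_type]
    dsimp only
    refine Finset.prod_congr rfl fun i _ => ?_
    rw [← Finset.prod_filter, Finset.prod_const]
  have hB : ∏ q ∈ Finset.univ.filter (fun q : Fin n × Fin n => q.1 ≤ q.2), d q.2
      = ∏ j, d j ^ (Finset.univ.filter fun i : Fin n => i ≤ j).card := by
    rw [Finset.prod_filter, Fintype.prod_prod_type]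
    dsimp only
    rw [Finset.prod_comm]
    refine Finset.prod_congr rfl fun j _ => ?_
    rw [← Finset.prod_filter, Finset.prod_const]
  rw [hA, hB, ← Finset.prod_mul_distrib]
  have hcard : ∀ i : Fin n,
      (Finset.univ.filter fun j : Fin n => i ≤ j).card
        + (Finset.univ.filter fun j : Fin n => j ≤ i).card = n + 1 := by
    intro i
    have hu : (Finset.univ.filter fun j : Fin n => i ≤ j)
        ∪ (Finset.univ.filter fun j : Fin n => j ≤ i) = Finset.univ := by
      ext j; simp [le_total i j]
    have hi : (Finset.univ.filter fun j : Fin n => i ≤ j)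
        ∩ (Finset.univ.filter fun j : Fin n => j ≤ i) = {i} := by
      ext j
      simp only [Finset.mem_inter, Finset.mem_filter, Finset.mem_univ, true_and,
        Finset.mem_singleton]
      constructor
      · rintro ⟨h1, h2⟩; exact le_antisymm h2 h1
      · rintro rfl; exact ⟨le_refl _, le_refl _⟩
    have := Finset.card_union_add_card_inter
      (Finset.univ.filter fun j : Fin n => i ≤ j)
      (Finset.univ.filter fun j : Fin n => j ≤ i)
    rw [hu, hi] at this
    simpa using this.symm
  calc ∏ i, d i ^ (Finset.univ.filter fun j : Fin n => i ≤ j).card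
        * d i ^ (Finset.univ.filter fun j : Fin n => j ≤ i).card
      = ∏ i, d i ^ (n + 1) := by
        refine Finset.prod_congr rfl fun i _ => ?_
        rw [← pow_add, hcard i]
  _ = (∏ i, d i) ^ (n + 1) := by rw [Finset.prod_pow]

end StmtAux

namespace StmtAux

variable {F : Type} [Field F] {n : ℕ}

lemma det_T_mul (a a' : Matrix (Fin n) (Fin n) F) :
    LinearMap.det (T F n (a * a')) =
      LinearMap.det (T F n a) * LinearMap.det (T F n a') := by
  rw [T_mul, LinearMap.det_comp]

lemma det_T_list (L : List (Matrix.TransvectionStruct (Fin n) F)) :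
    LinearMap.det (T F n (L.map Matrix.TransvectionStruct.toMatrix).prod) = 1 := by
  induction L with
  | nil =>
      simp only [List.map_nil, List.prod_nil]
      rw [T_one, LinearMap.det_id]
  | cons t L ih =>
      rw [List.map_cons, List.prod_cons, det_T_mul, ih, mul_one]
      exact det_T_transvection t.hij t.c

end StmtAux

/-- For `a ∈ GLₙ(F)` (char F ≠ 2), the map `b ↦ a b J ᵗa J` preserves
`W' = { b : J b = ᵗb J }` and has determinant `det(a)^{n+1}` on `W'`. -/
theorem stmt_11 (F : Type) [Field F] (hchar : (2 : F) ≠ 0) (n : ℕ)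
    (a : Matrix (Fin n) (Fin n) F) (ha : IsUnit a) :
    ∃ T : Wsp F n →ₗ[F] Wsp F n,
      (∀ b : Wsp F n,
        (T b : Matrix (Fin n) (Fin n) F) = a * (b : Matrix (Fin n) (Fin n) F) *
          (Jmat F n * aᵀ * Jmat F n)) ∧
      LinearMap.det T = a.det ^ (n + 1) := by
  refine ⟨StmtAux.T F n a, fun b => rfl, ?_⟩
  obtain ⟨L, L', D, h⟩ := Matrix.Pivot.exists_list_transvec_mul_mul_list_transvec_eq_diagonal a
  have h1 := congrArg (fun M => LinearMap.det (StmtAux.T F n M)) h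
  rw [StmtAux.det_T_mul, StmtAux.det_T_mul, StmtAux.det_T_list, StmtAux.det_T_list,
    one_mul, mul_one, StmtAux.det_T_diagonal, StmtAux.prod_pairs] at h1
  have h2 := congrArg Matrix.det h
  rw [Matrix.det_mul, Matrix.det_mul, Matrix.TransvectionStruct.det_toMatrix_prod,
    Matrix.TransvectionStruct.det_toMatrix_prod, one_mul, mul_one,
    Matrix.det_diagonal] at h2
  rw [h1, h2]
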